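/- Fix δ > 0 and define g_δ : ℝ → ℝ by g_δ(d) = δ·sign(d) if 0 < |d| < 1/2, g_δ(d) = −δ·sign(d) if 1/2 < |d| ≤ 1, g_δ(0) = 0. For a pair (i,j) define the pairwise update U_{ij} : ℝ³ → ℝ³ which replaces o_i by o_i + g_δ(o_j − o_i) and o_j by o_j + g_δ(o_i − o_j), leaving the third coordinate unchanged. Let T = U_{13} ∘ U_{23} ∘ U_{12}. Then for every p = (o₁, o₂, o₃) ∈ ℝ³ satisfying 0 < o₂ − o₁ < 1/2, 0 < o₃ − o₂ < 1/2, 1/2 < o₃ − o₁ < 1, and δ < min{1/2 − (o₃ − o₂), ((o₃ − o₁) − 1/2)/2}, one has T(p) = p; in particular T^n(p) = p for all n, the orbit of p under the deterministic interaction order (1,2) → (2,3) → (3,1) is periodic with period 3, and the set of points p satisfying these strict inequalities is open. -/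
import Mathlib


/-- The tent step: an agent moves by `δ` toward the other when their
difference is in `(0, 1/2)`, away when it is in `(1/2, 1]`, else stays. -/
noncomputable def tentStep (δ d : ℝ) : ℝ :=
  if 0 < |d| ∧ |d| < 1/2 then δ * Real.sign d
  else if 1/2 < |d| ∧ |d| ≤ 1 then -(δ * Real.sign d)
  else 0

/-- The pairwise update `U_{ij}`: replaces `o i` by `o i + g_δ(o j − o i)` and
`o j` by `o j + g_δ(o i − o j)`, leaving the third coordinate unchanged. -/
noncomputable def pairUpdate (δ : ℝ) (i j : Fin 3) (o : Fin 3 → ℝ) : Fin 3 → ℝ :=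
  Function.update (Function.update o i (o i + tentStep δ (o j - o i)))
    j (o j + tentStep δ (o i - o j))


lemma tent_near_pos (δ d : ℝ) (h1 : 0 < d) (h2 : d < 1/2) : tentStep δ d = δ := by
  unfold tentStep
  rw [abs_of_pos h1, Real.sign_of_pos h1, if_pos ⟨h1, h2⟩, mul_one]

lemma tent_near_neg (δ d : ℝ) (h1 : d < 0) (h2 : -(1/2) < d) : tentStep δ d = -δ := by
  unfold tentStep
  rw [abs_of_neg h1, Real.sign_of_neg h1]
  rw [if_pos ⟨by linarith, by linarith⟩]; ring

lemma tent_far_pos (δ d : ℝ) (h1 : 1/2 < d) (h2 : d ≤ 1) : tentStep δ d = -δ := by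
  unfold tentStep
  rw [abs_of_pos (by linarith), Real.sign_of_pos (by linarith)]
  rw [if_neg (by push_neg; intro _; linarith), if_pos ⟨h1, h2⟩, mul_one]

lemma tent_far_neg (δ d : ℝ) (h1 : d < -(1/2)) (h2 : -1 ≤ d) : tentStep δ d = δ := by
  unfold tentStep
  rw [abs_of_neg (by linarith), Real.sign_of_neg (by linarith)]
  rw [if_neg (by push_neg; intro _; linarith), if_pos ⟨by linarith, by linarith⟩]; ring

/-- Proposition (LiapunovDance): under the deterministic interaction order
`(1,2) → (2,3) → (3,1)`, every point in the given region (an open region,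
provided the step size `δ` is small enough for it) is periodic of period 3. -/
theorem discrete_period_three (δ : ℝ) (hδ : 0 < δ) :
    (∀ o : Fin 3 → ℝ,
      0 < o 1 - o 0 → o 1 - o 0 < 1/2 →
      0 < o 2 - o 1 → o 2 - o 1 < 1/2 →
      1/2 < o 2 - o 0 → o 2 - o 0 < 1 →
      δ < min (1/2 - (o 2 - o 1)) (((o 2 - o 0) - 1/2) / 2) →
      (pairUpdate δ 0 2 ∘ pairUpdate δ 1 2 ∘ pairUpdate δ 0 1) o = o ∧
      ∀ n : ℕ, (pairUpdate δ 0 2 ∘ pairUpdate δ 1 2 ∘ pairUpdate δ 0 1)^[n] o = o) ∧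
    IsOpen {o : Fin 3 → ℝ |
      0 < o 1 - o 0 ∧ o 1 - o 0 < 1/2 ∧
      0 < o 2 - o 1 ∧ o 2 - o 1 < 1/2 ∧
      1/2 < o 2 - o 0 ∧ o 2 - o 0 < 1 ∧
      δ < min (1/2 - (o 2 - o 1)) (((o 2 - o 0) - 1/2) / 2)} := by
  constructor
  · intro o h1 h2 h3 h4 h5 h6 hmin
    rw [lt_min_iff] at hmin
    obtain ⟨hm1, hm2⟩ := hmin
    set q := pairUpdate δ 0 1 o with hq
    have hq0 : q 0 = o 0 + δ := by
      rw [hq, pairUpdate, Function.update_of_ne (by decide), Function.update_self,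
        tent_near_pos δ _ h1 h2]
    have hq1 : q 1 = o 1 - δ := by
      rw [hq, pairUpdate, Function.update_self,
        tent_near_neg δ _ (by linarith) (by linarith)]
      ring
    have hq2 : q 2 = o 2 := by
      rw [hq, pairUpdate, Function.update_of_ne (by decide),
        Function.update_of_ne (by decide)]
    set r := pairUpdate δ 1 2 q with hr
    have hd2 : q 2 - q 1 = o 2 - o 1 + δ := by rw [hq1, hq2]; ring
    have hr0 : r 0 = o 0 + δ := by
      rw [hr, pairUpdate, Function.update_of_ne (by decide),
        Function.update_of_ne (by decide), hq0]
    have hr1 : r 1 = o 1 := by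
      rw [hr, pairUpdate, Function.update_of_ne (by decide), Function.update_self]
      rw [show tentStep δ (q 2 - q 1) = δ from by
        rw [hd2]; exact tent_near_pos δ _ (by linarith) (by linarith), hq1]
      ring
    have hr2 : r 2 = o 2 - δ := by
      rw [hr, pairUpdate, Function.update_self]
      rw [show tentStep δ (q 1 - q 2) = -δ from by
        rw [show q 1 - q 2 = -(o 2 - o 1 + δ) from by rw [hq1, hq2]; ring]
        exact tent_near_neg δ _ (by linarith) (by linarith), hq2]
      ring
    have hfix : pairUpdate δ 0 2 r = o := by
      have hd3 : r 2 - r 0 = o 2 - o 0 - 2*δ := by rw [hr0, hr2]; ring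
      have ht1 : tentStep δ (r 2 - r 0) = -δ := by
        rw [hd3]; exact tent_far_pos δ _ (by linarith) (by linarith)
      have ht2 : tentStep δ (r 0 - r 2) = δ := by
        rw [show r 0 - r 2 = -(o 2 - o 0 - 2*δ) from by rw [hr0, hr2]; ring]
        exact tent_far_neg δ _ (by linarith) (by linarith)
      funext k
      fin_cases k
      · show pairUpdate δ 0 2 r 0 = o 0
        rw [pairUpdate, Function.update_of_ne (by decide), Function.update_self,
          ht1, hr0]
        ring
      · show pairUpdate δ 0 2 r 1 = o 1
        rw [pairUpdate, Function.update_of_ne (by decide),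
          Function.update_of_ne (by decide), hr1]
      · show pairUpdate δ 0 2 r 2 = o 2
        rw [pairUpdate, Function.update_self, ht2, hr2]
        ring
    have hT : (pairUpdate δ 0 2 ∘ pairUpdate δ 1 2 ∘ pairUpdate δ 0 1) o = o := hfix
    refine ⟨hT, fun n => ?_⟩
    induction n with
    | zero => rfl
    | succ n ih => rw [Function.iterate_succ_apply, hT]; exact ih
  · have hc : ∀ (i j : Fin 3), Continuous (fun o : Fin 3 → ℝ => o i - o j) :=
      fun i j => (continuous_apply i).sub (continuous_apply j)
    refine IsOpen.and (isOpen_lt continuous_const (hc 1 0)) ?_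
    refine IsOpen.and (isOpen_lt (hc 1 0) continuous_const) ?_
    refine IsOpen.and (isOpen_lt continuous_const (hc 2 1)) ?_
    refine IsOpen.and (isOpen_lt (hc 2 1) continuous_const) ?_
    refine IsOpen.and (isOpen_lt continuous_const (hc 2 0)) ?_
    refine IsOpen.and (isOpen_lt (hc 2 0) continuous_const) ?_
    exact isOpen_lt continuous_const
      ((continuous_const.sub (hc 2 1)).min (((hc 2 0).sub continuous_const).div_const 2))
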